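/- If d_0 is a homogeneous derivation of degree 0 from 𝔏 to 𝔏 ⊗ 𝔏, then d_0(L_0) = 0. -/
import Mathlib


open Finsupp

/-- Basis of the generalized super W-algebra 𝔏 (indices range over ℝ;
the actual algebra 𝔏 has indices restricted to Γ resp. s+Γ, see `good`). -/
inductive BasisL : Type
  | L : ℝ → BasisL
  | I : ℝ → BasisL
  | G : ℝ → BasisL
  | H : ℝ → BasisL

noncomputable instance : DecidableEq BasisL := Classical.decEq _

/-- The ambient free ℂ-module on the basis. -/
abbrev LL : Type := BasisL →₀ ℂ
/-- Model for 𝔏 ⊗ 𝔏 : free module on pairs of basis elements. -/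
abbrev VV : Type := (BasisL × BasisL) →₀ ℂ
/-- Model for 𝔏 ⊗ 𝔏 ⊗ 𝔏. -/
abbrev WW : Type := (BasisL × BasisL × BasisL) →₀ ℂ

noncomputable def bL (p : ℝ) : LL := Finsupp.single (BasisL.L p) 1
noncomputable def bI (p : ℝ) : LL := Finsupp.single (BasisL.I p) 1
noncomputable def bG (r : ℝ) : LL := Finsupp.single (BasisL.G r) 1
noncomputable def bH (r : ℝ) : LL := Finsupp.single (BasisL.H r) 1

/-- Parity (0 = even, 1 = odd). -/
def pN : BasisL → ℕ
  | BasisL.L _ => 0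
  | BasisL.I _ => 0
  | BasisL.G _ => 1
  | BasisL.H _ => 1

/-- Z_s-degree of a basis element. -/
def degB : BasisL → ℝ
  | BasisL.L p => p
  | BasisL.I p => p
  | BasisL.G r => r
  | BasisL.H r => r

/-- Membership of a basis element in the actual algebra 𝔏 :
L_p, I_p for p ∈ Γ and G_r, H_r for r ∈ s + Γ. -/
def good (Γ : AddSubgroup ℝ) (s : ℝ) : BasisL → Prop
  | BasisL.L p => p ∈ Γ
  | BasisL.I p => p ∈ Γ
  | BasisL.G r => r - s ∈ Γ
  | BasisL.H r => r - s ∈ Γ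

/-- The super-bracket on basis elements (extended by super skew-symmetry). -/
noncomputable def bb : BasisL → BasisL → LL
  | BasisL.L p, BasisL.L q => ((p - q : ℝ) : ℂ) • bL (p + q)
  | BasisL.L p, BasisL.I q => ((p - q : ℝ) : ℂ) • bI (p + q)
  | BasisL.I p, BasisL.L q => ((p - q : ℝ) : ℂ) • bI (p + q)
  | BasisL.L p, BasisL.G r => ((p / 2 - r : ℝ) : ℂ) • bG (p + r)
  | BasisL.G r, BasisL.L p => ((-(p / 2 - r) : ℝ) : ℂ) • bG (p + r)
  | BasisL.L p, BasisL.H r => ((p / 2 - r : ℝ) : ℂ) • bH (p + r)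
  | BasisL.H r, BasisL.L p => ((-(p / 2 - r) : ℝ) : ℂ) • bH (p + r)
  | BasisL.G r, BasisL.G t => bI (r + t)
  | BasisL.I p, BasisL.G r => ((p - 2 * r : ℝ) : ℂ) • bH (p + r)
  | BasisL.G r, BasisL.I p => ((-(p - 2 * r) : ℝ) : ℂ) • bH (p + r)
  | _, _ => 0

/-- The super-bracket, extended bilinearly. -/
noncomputable def br (x y : LL) : LL :=
  x.sum fun a ca => y.sum fun b cb => (ca * cb) • bb a b

/-- u ⊗ b for u ∈ 𝔏, b a basis element. -/
noncomputable def tenL (u : LL) (b : BasisL) : VV :=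
  u.sum fun a ca => Finsupp.single (a, b) ca

/-- a ⊗ u for a a basis element, u ∈ 𝔏. -/
noncomputable def tenR (a : BasisL) (u : LL) : VV :=
  u.sum fun b cb => Finsupp.single (a, b) cb

/-- Super adjoint diagonal action of a basis element on a ⊗ b :
c ∘ (a ⊗ b) = [c,a] ⊗ b + (−1)^{[c][a]} a ⊗ [c,b]. -/
noncomputable def actB (c a b : BasisL) : VV :=
  tenL (bb c a) b + ((-1 : ℂ) ^ (pN c * pN a)) • tenR a (bb c b)

/-- Super adjoint diagonal action of x ∈ 𝔏 on u ∈ 𝔏 ⊗ 𝔏. -/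
noncomputable def act (x : LL) (u : VV) : VV :=
  x.sum fun c cc => u.sum fun ab cab => (cc * cab) • actB c ab.1 ab.2

/-- The super-twist τ(a ⊗ b) = (−1)^{[a][b]} b ⊗ a. -/
noncomputable def tauV (u : VV) : VV :=
  u.sum fun ab c => (((-1 : ℂ) ^ (pN ab.1 * pN ab.2)) * c) • Finsupp.single (ab.2, ab.1) (1 : ℂ)

noncomputable def t1 (u : LL) (b c : BasisL) : WW :=
  u.sum fun a ca => Finsupp.single (a, b, c) ca
noncomputable def t2 (a : BasisL) (u : LL) (c : BasisL) : WW :=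
  u.sum fun b cb => Finsupp.single (a, b, c) cb
noncomputable def t3 (a b : BasisL) (u : LL) : WW :=
  u.sum fun c cc => Finsupp.single (a, b, c) cc
noncomputable def t23 (a : BasisL) (u : VV) : WW :=
  u.sum fun bc x => Finsupp.single (a, bc.1, bc.2) x

/-- c(r) = [r¹²,r¹³] + [r¹²,r²³] + [r¹³,r²³] ∈ 𝔏⊗𝔏⊗𝔏. -/
noncomputable def cYB (r : VV) : WW :=
  r.sum fun ab x => r.sum fun ab' y =>
    (x * y) •
      (((-1 : ℂ) ^ (pN ab'.1 * pN ab.2)) • t1 (bb ab.1 ab'.1) ab.2 ab'.2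
        + t2 ab.1 (bb ab.2 ab'.1) ab'.2
        + ((-1 : ℂ) ^ (pN ab'.1 * pN ab.2)) • t3 ab.1 ab'.1 (bb ab.2 ab'.2))

/-- Super adjoint diagonal action of a basis element on a ⊗ b ⊗ c. -/
noncomputable def act3B (d a b c : BasisL) : WW :=
  t1 (bb d a) b c + ((-1 : ℂ) ^ (pN d * pN a)) • t2 a (bb d b) c
    + ((-1 : ℂ) ^ (pN d * (pN a + pN b))) • t3 a b (bb d c)

/-- Super adjoint diagonal action of x ∈ 𝔏 on 𝔏⊗𝔏⊗𝔏. -/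
noncomputable def act3 (x : LL) (u : WW) : WW :=
  x.sum fun d cd => u.sum fun abc cu => (cd * cu) • act3B d abc.1 abc.2.1 abc.2.2

/-- The super-cyclic map ξ(a⊗b⊗c) = (−1)^{[a]([b]+[c])} b⊗c⊗a. -/
noncomputable def xiW (u : WW) : WW :=
  u.sum fun abc x =>
    (((-1 : ℂ) ^ (pN abc.1 * (pN abc.2.1 + pN abc.2.2))) * x) •
      Finsupp.single (abc.2.1, abc.2.2, abc.1) (1 : ℂ)

/-- (1 ⊗ Δ) applied to an element of 𝔏⊗𝔏. -/
noncomputable def oneTensor (D : LL →ₗ[ℂ] VV) (u : VV) : WW :=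
  u.sum fun ab c => c • t23 ab.1 (D (Finsupp.single ab.2 1))

/-- x ∈ 𝔏 (support consists of good basis elements). -/
def inL (Γ : AddSubgroup ℝ) (s : ℝ) (x : LL) : Prop :=
  ∀ a ∈ x.support, good Γ s a

/-- u ∈ 𝔏 ⊗ 𝔏. -/
def inV (Γ : AddSubgroup ℝ) (s : ℝ) (u : VV) : Prop :=
  ∀ ab ∈ u.support, good Γ s ab.1 ∧ good Γ s ab.2

/-- x ∈ 𝔏_p, the homogeneous component of degree p. -/
def inComp (Γ : AddSubgroup ℝ) (s : ℝ) (p : ℝ) (x : LL) : Prop :=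
  ∀ a ∈ x.support, good Γ s a ∧ degB a = p

/-- u ∈ 𝔙_r = ⊕_{p+q=r} 𝔏_p ⊗ 𝔏_q. -/
def inCompV (Γ : AddSubgroup ℝ) (s : ℝ) (r : ℝ) (u : VV) : Prop :=
  ∀ ab ∈ u.support, good Γ s ab.1 ∧ good Γ s ab.2 ∧ degB ab.1 + degB ab.2 = r

/-- x is ℤ₂-homogeneous of parity i. -/
def IsHomogP (x : LL) (i : ℕ) : Prop :=
  ∀ a ∈ x.support, pN a % 2 = i % 2

/-- u ∈ 𝔏⊗𝔏 is ℤ₂-homogeneous of parity i. -/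
def IsHomogVP (u : VV) (i : ℕ) : Prop :=
  ∀ ab ∈ u.support, (pN ab.1 + pN ab.2) % 2 = i % 2

/-- d : 𝔏 → 𝔏⊗𝔏 is a homogeneous derivation of parity ι (for the super
adjoint diagonal action):
d([x,y]) = (−1)^{[d][x]} x∘d(y) − (−1)^{[y]([d]+[x])} y∘d(x). -/
def IsDer (Γ : AddSubgroup ℝ) (s : ℝ) (ι : ℕ) (d : LL →ₗ[ℂ] VV) : Prop :=
  (∀ x, inL Γ s x → inV Γ s (d x)) ∧
  (∀ (i : ℕ) (x : LL), inL Γ s x → IsHomogP x i → IsHomogVP (d x) (i + ι)) ∧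
  ∀ (i j : ℕ) (x y : LL), inL Γ s x → inL Γ s y → IsHomogP x i → IsHomogP y j →
    d (br x y)
      = ((-1 : ℂ) ^ (ι * i)) • act x (d y) - ((-1 : ℂ) ^ (j * (ι + i))) • act y (d x)

/-- d has degree t : d(𝔏_p) ⊆ 𝔙_{p+t}. -/
def HasDeg (Γ : AddSubgroup ℝ) (s : ℝ) (t : ℝ) (d : LL →ₗ[ℂ] VV) : Prop :=
  ∀ (p : ℝ) (x : LL), inComp Γ s p x → inCompV Γ s (p + t) (d x)


/-- Auxiliary: the effect of bracketing with `L_q` on a basis index. -/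
noncomputable def shiftq (q : ℝ) : BasisL → BasisL
  | BasisL.L m => BasisL.L (q + m)
  | BasisL.I m => BasisL.I (q + m)
  | BasisL.G r => BasisL.G (q + r)
  | BasisL.H r => BasisL.H (q + r)

/-- Auxiliary: the scalar appearing in `[L_q, a]`. -/
noncomputable def lamq (q : ℝ) : BasisL → ℝ
  | BasisL.L m => q - m
  | BasisL.I m => q - m
  | BasisL.G r => q / 2 - r
  | BasisL.H r => q / 2 - r

lemma shiftq_inj (q : ℝ) {a a' : BasisL} (h : shiftq q a = shiftq q a') : a = a' := by
  cases a <;> cases a' <;> simp_all [shiftq]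

lemma degB_shiftq (q : ℝ) (a : BasisL) : degB (shiftq q a) = q + degB a := by
  cases a <;> simp [shiftq, degB]

lemma bb_L (q : ℝ) (a : BasisL) :
    bb (BasisL.L q) a = ((lamq q a : ℝ) : ℂ) • Finsupp.single (shiftq q a) 1 := by
  cases a <;> simp [bb, bL, bI, bG, bH, lamq, shiftq]

lemma tenL_single (c : ℂ) (x b : BasisL) :
    tenL (c • Finsupp.single x 1) b = Finsupp.single (x, b) c := by
  simp [tenL, Finsupp.smul_single', Finsupp.sum_single_index]

lemma tenR_single (c : ℂ) (a x : BasisL) :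
    tenR a (c • Finsupp.single x 1) = Finsupp.single (a, x) c := by
  simp [tenR, Finsupp.smul_single', Finsupp.sum_single_index]

lemma actB_L (q : ℝ) (a b : BasisL) :
    actB (BasisL.L q) a b
      = Finsupp.single (shiftq q a, b) ((lamq q a : ℝ) : ℂ)
        + Finsupp.single (a, shiftq q b) ((lamq q b : ℝ) : ℂ) := by
  rw [actB, bb_L, bb_L, tenL_single, tenR_single]
  simp [pN]

lemma act_bL (q : ℝ) (u : VV) :
    act (bL q) u = u.sum fun ab c => c • actB (BasisL.L q) ab.1 ab.2 := by
  rw [act, bL, Finsupp.sum_single_index] <;> simp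

lemma act_bL0 (r : ℝ) (u : VV) (h : ∀ ab ∈ u.support, degB ab.1 + degB ab.2 = r) :
    act (bL 0) u = ((-r : ℝ) : ℂ) • u := by
  rw [act_bL]
  conv_rhs => rw [← Finsupp.sum_single u, Finsupp.smul_sum]
  apply Finsupp.sum_congr
  intro ab hab
  rw [actB_L]
  have h1 : shiftq 0 ab.1 = ab.1 := by cases ab.1 <;> simp [shiftq]
  have h2 : shiftq 0 ab.2 = ab.2 := by cases ab.2 <;> simp [shiftq]
  have l1 : lamq 0 ab.1 = -degB ab.1 := by cases ab.1 <;> simp [lamq, degB] <;> ring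
  have l2 : lamq 0 ab.2 = -degB ab.2 := by cases ab.2 <;> simp [lamq, degB] <;> ring
  rw [h1, h2, l1, l2, ← Finsupp.single_add, Finsupp.smul_single', Finsupp.smul_single']
  have hr := h ab hab
  congr 1
  rw [← hr]
  push_cast
  ring

lemma inL_bL {Γ : AddSubgroup ℝ} {s q : ℝ} (hq : q ∈ Γ) : inL Γ s (bL q) := by
  intro a ha
  rw [bL, Finsupp.support_single_ne_zero _ one_ne_zero, Finset.mem_singleton] at ha
  subst ha; exact hq

lemma homog_bL (q : ℝ) : IsHomogP (bL q) 0 := by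
  intro a ha
  rw [bL, Finsupp.support_single_ne_zero _ one_ne_zero, Finset.mem_singleton] at ha
  subst ha; rfl

lemma inComp_bL {Γ : AddSubgroup ℝ} {s q : ℝ} (hq : q ∈ Γ) : inComp Γ s q (bL q) := by
  intro a ha
  rw [bL, Finsupp.support_single_ne_zero _ one_ne_zero, Finset.mem_singleton] at ha
  subst ha; exact ⟨hq, rfl⟩

lemma br_bL0_bL (q : ℝ) : br (bL 0) (bL q) = ((-q : ℝ) : ℂ) • bL q := by
  simp [br, bL, bb, Finsupp.sum_single_index]

/-- case s ∈ Γ: a homogeneous derivation of degree 0 from 𝔏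
to 𝔏⊗𝔏 kills L_0. -/
theorem stmt10 (Γ : AddSubgroup ℝ) (hΓ : Γ ≠ ⊥) (s : ℝ) (hs : s ∈ Γ)
    (ι : ℕ) (d : LL →ₗ[ℂ] VV) (hd : IsDer Γ s ι d) (hdeg : HasDeg Γ s 0 d) :
    d (bL 0) = 0 := by
  have key : ∀ q ∈ Γ, act (bL q) (d (bL 0)) = 0 := by
    intro q hq
    have hleib := hd.2.2 0 0 (bL 0) (bL q) (inL_bL Γ.zero_mem) (inL_bL hq)
      (homog_bL 0) (homog_bL q)
    rw [br_bL0_bL, map_smul] at hleib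
    have hq0 : act (bL 0) (d (bL q)) = ((-q : ℝ) : ℂ) • d (bL q) := by
      apply act_bL0
      intro ab hab
      have := hdeg q (bL q) (inComp_bL hq) ab hab
      rw [add_zero] at this
      exact this.2.2
    rw [hq0] at hleib
    simp only [Nat.mul_zero, Nat.zero_mul, mul_zero, zero_mul, pow_zero, one_smul] at hleib
    have h2 := hleib.symm
    rwa [sub_eq_self] at h2
  by_contra hne
  set u := d (bL 0) with hu
  have hsupp : u.support.Nonempty := Finsupp.support_nonempty_iff.mpr hne
  have hdegsupp : ∀ ab ∈ u.support, degB ab.1 + degB ab.2 = 0 := by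
    intro ab hab
    have := hdeg 0 (bL 0) (inComp_bL Γ.zero_mem) ab hab
    have h00 : (0 : ℝ) + 0 = 0 := by ring
    rw [h00] at this
    exact this.2.2
  set S := u.support.image (fun ab => degB ab.1) with hS
  have hSne : S.Nonempty := hsupp.image _
  set M := S.max' hSne with hM
  obtain ⟨ab₀, hab₀, hab₀M⟩ := Finset.mem_image.mp (S.max'_mem hSne)
  have hle : ∀ ab ∈ u.support, degB ab.1 ≤ M := fun ab hab =>
    Finset.le_max' S _ (Finset.mem_image_of_mem _ hab)
  obtain ⟨p, hpΓ, hp0⟩ : ∃ p ∈ Γ, p ≠ 0 := by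
    by_contra h
    push_neg at h
    exact hΓ ((AddSubgroup.eq_bot_iff_forall Γ).mpr h)
  have hpΓ' : |p| ∈ Γ := by
    rcases abs_choice p with h | h
    · rw [h]; exact hpΓ
    · rw [h]; exact neg_mem hpΓ
  have hppos : (0 : ℝ) < |p| := abs_pos.mpr hp0
  obtain ⟨q, hqΓ, hqpos, hqM, hq2M⟩ :
      ∃ q ∈ Γ, 0 < q ∧ q ≠ M ∧ q ≠ 2 * M := by
    by_contra hcon
    push_neg at hcon
    have d1 := hcon |p| hpΓ' hppos
    have d2 := hcon (2 * |p|) (by simpa [two_mul] using add_mem hpΓ' hpΓ') (by linarith)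
    have d3 := hcon (3 * |p|) (by
      have : (3 : ℝ) * |p| = |p| + (|p| + |p|) := by ring
      rw [this]; exact add_mem hpΓ' (add_mem hpΓ' hpΓ')) (by linarith)
    by_cases e1 : |p| = M
    · by_cases e2 : 2 * |p| = M
      · linarith
      · have := d2 e2
        have e3 : 3 * |p| ≠ M := by intro h; linarith
        have := d3 e3
        linarith
    · have := d1 e1
      by_cases e2 : 2 * |p| = M
      · linarith
      · have := d2 e2
        linarith
  have h0 := DFunLike.congr_fun (key q hqΓ) (shiftq q ab₀.1, ab₀.2)
  rw [act_bL, Finsupp.sum_apply, Finsupp.zero_apply] at h0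
  have heval : ∀ ab ∈ u.support, ab ≠ ab₀ →
      (u ab • actB (BasisL.L q) ab.1 ab.2) (shiftq q ab₀.1, ab₀.2) = 0 := by
    intro ab hab hne'
    rw [actB_L]
    have c1 : (shiftq q ab.1, ab.2) ≠ (shiftq q ab₀.1, ab₀.2) := by
      intro hcon
      have e1 := shiftq_inj q (Prod.ext_iff.mp hcon).1
      have e2 := (Prod.ext_iff.mp hcon).2
      exact hne' (Prod.ext e1 e2)
    have c2 : (ab.1, shiftq q ab.2) ≠ (shiftq q ab₀.1, ab₀.2) := by
      intro hcon
      have e1 := (Prod.ext_iff.mp hcon).1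
      have hd1 : degB ab.1 = q + degB ab₀.1 := by rw [e1, degB_shiftq]
      have := hle ab hab
      rw [hab₀M] at hd1
      linarith
    simp [Finsupp.single_apply, c1, c2]
  have heval0 : (u ab₀ • actB (BasisL.L q) ab₀.1 ab₀.2) (shiftq q ab₀.1, ab₀.2)
      = u ab₀ * ((lamq q ab₀.1 : ℝ) : ℂ) := by
    rw [actB_L]
    have c2 : (ab₀.1, shiftq q ab₀.2) ≠ (shiftq q ab₀.1, ab₀.2) := by
      intro hcon
      have e1 := (Prod.ext_iff.mp hcon).1
      have hd1 : degB ab₀.1 = q + degB ab₀.1 := by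
        conv_lhs => rw [e1, degB_shiftq]
      linarith
    simp [Finsupp.single_apply, c2]
  rw [Finsupp.sum, Finset.sum_eq_single_of_mem ab₀ hab₀ heval, heval0] at h0
  have hc : u ab₀ ≠ 0 := Finsupp.mem_support_iff.mp hab₀
  have hlam : lamq q ab₀.1 = 0 := by
    rcases mul_eq_zero.mp h0 with h | h
    · exact absurd h hc
    · exact_mod_cast h
  rcases hA : ab₀.1 with m | m | r | r <;> rw [hA] at hlam hab₀M <;>
    simp only [lamq, degB] at hlam hab₀M
  · exact hqM (by linarith)
  · exact hqM (by linarith)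
  · exact hq2M (by linarith)
  · exact hq2M (by linarith)
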